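/- Let 1 ≤ d ≤ q²−1 and write d = β₀ + β₁q with 0 ≤ β₀, β₁ ≤ q−1 (the q-adic expansion of d). Then |T| = β₁(q−1−β₁) + min{β₀, q−1−β₁} + min{β₁, q−1−β₀}. -/
import Mathlib

def ob (N z : ℕ) : ℕ := if z = 0 then 0 else (z - 1) % (N - 1) + 1

lemma digit_lt {q x y a b : ℕ} (hx : x < q) (ha : a ≤ q) :
    x + q * y < a + q * b ↔ y < b ∨ (y = b ∧ x < a) := by
  constructor
  · intro h
    rcases lt_trichotomy y b with h' | h' | h'
    · exact Or.inl h'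
    · subst h'; exact Or.inr ⟨rfl, by omega⟩
    · exfalso
      have h2 : q * b + q ≤ q * y := by
        have := Nat.mul_le_mul_left q h'
        rw [Nat.mul_succ] at this; exact this
      omega
  · rintro (h' | ⟨rfl, h'⟩)
    · have h2 : q * y + q ≤ q * b := by
        have := Nat.mul_le_mul_left q h'
        rw [Nat.mul_succ] at this; exact this
      omega
    · omega

lemma ob_val {q x y : ℕ} (hq : 2 ≤ q) (hx : x < q) (hy : y < q) :
    ob (q ^ 2) (q * (x + q * y)) = q * x + y := by
  have hqq : q ^ 2 = q * q := sq q
  unfold ob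
  by_cases h0 : x + q * y = 0
  · have hx0 : x = 0 := by omega
    have hqy : q * y = 0 := by omega
    have hy0 : y = 0 := by
      rcases Nat.mul_eq_zero.mp hqy with h | h <;> omega
    simp [hx0, hy0]
  · have hz : q * (x + q * y) ≠ 0 := Nat.mul_ne_zero (by omega) h0
    rw [if_neg hz, hqq]
    have hs1 : 1 ≤ q * x + y := by
      rcases Nat.eq_zero_or_pos x with rfl | hxp
      · have hqy : q * y ≠ 0 := by omega
        have : y ≠ 0 := by rcases Nat.mul_eq_zero.not.mp hqy with h; omega
        omega
      · have : q * 1 ≤ q * x := Nat.mul_le_mul_left q hxp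
        omega
    have hs2 : q * x + y + 1 ≤ q * q := by
      have h1 : q * (x + 1) ≤ q * q := Nat.mul_le_mul_left q (by omega)
      rw [Nat.mul_succ] at h1
      omega
    have key : q * (x + q * y) = (q * x + y) + (q * q - 1) * y := by
      zify [show 1 ≤ q * q by nlinarith]
      ring
    rw [key]
    have hE : q * x + y + (q * q - 1) * y - 1 = (q * x + y - 1) + (q * q - 1) * y := by
      omega
    rw [hE, Nat.add_mul_mod_self_left, Nat.mod_eq_of_lt (by omega)]
    omega

/-- with `d = β₀ + β₁q` the `q`-adic expansion of `d`,
`|T| = β₁(q−1−β₁) + min{β₀, q−1−β₁} + min{β₁, q−1−β₀}`, where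
`T = {a₂ : 0 ≤ a₂ ≤ q²−1, a₂ < d, d^⊥ > overline{qa₂} + (q²−1)}` and
`d^⊥ = 2(q²−1) − d`. -/
theorem stmt16 (q d β₀ β₁ : ℕ)
    (hq : ∃ p k : ℕ, p.Prime ∧ 0 < k ∧ q = p ^ k)
    (h1 : 1 ≤ d) (h2 : d ≤ q ^ 2 - 1)
    (hd : d = β₀ + β₁ * q) (hb0 : β₀ ≤ q - 1) (hb1 : β₁ ≤ q - 1) :
    {a₂ : ℕ | a₂ ≤ q ^ 2 - 1 ∧ a₂ < d ∧
        ob (q ^ 2) (q * a₂) + (q ^ 2 - 1) < 2 * (q ^ 2 - 1) - d}.ncard =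
      β₁ * (q - 1 - β₁) + min β₀ (q - 1 - β₁) + min β₁ (q - 1 - β₀) := by
  classical
  have hq2 : 2 ≤ q := by
    obtain ⟨p, k, hp, hk, rfl⟩ := hq
    exact Nat.one_lt_pow (by omega) hp.one_lt
  subst hd
  have hqq : q ^ 2 = q * q := sq q
  have hq4 : 4 ≤ q * q := by nlinarith
  rw [hqq] at h2
  set γ₀ := q - 1 - β₀ with hγ₀
  set γ₁ := q - 1 - β₁ with hγ₁
  have hD : q * q - 1 - (β₀ + β₁ * q) = γ₀ + q * γ₁ := by
    rw [hγ₀, hγ₁]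
    zify [hb0, hb1, h2, show 1 ≤ q * q by omega, show 1 ≤ q by omega]
    ring
  have hmain : ∀ x y : ℕ, x < q → y < q →
      ((x + q * y ≤ q ^ 2 - 1 ∧ x + q * y < β₀ + β₁ * q ∧
        ob (q ^ 2) (q * (x + q * y)) + (q ^ 2 - 1) < 2 * (q ^ 2 - 1) - (β₀ + β₁ * q)) ↔
       ((y < β₁ ∨ (y = β₁ ∧ x < β₀)) ∧ (x < γ₁ ∨ (x = γ₁ ∧ y < γ₀)))) := by
    intro x y hx hy
    rw [ob_val hq2 hx hy, hqq]
    have e1 : x + q * y < β₀ + q * β₁ ↔ y < β₁ ∨ (y = β₁ ∧ x < β₀) :=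
      digit_lt hx (by omega)
    have e2 : y + q * x < γ₀ + q * γ₁ ↔ x < γ₁ ∨ (x = γ₁ ∧ y < γ₀) :=
      digit_lt hy (by omega)
    have hb : x + q * y ≤ q * q - 1 := by
      have h1' : q * (y + 1) ≤ q * q := Nat.mul_le_mul_left q (by omega)
      rw [Nat.mul_succ] at h1'
      omega
    have hcomm : β₁ * q = q * β₁ := Nat.mul_comm _ _
    omega
  have hset : {a₂ : ℕ | a₂ ≤ q ^ 2 - 1 ∧ a₂ < β₀ + β₁ * q ∧
        ob (q ^ 2) (q * a₂) + (q ^ 2 - 1) < 2 * (q ^ 2 - 1) - (β₀ + β₁ * q)} =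
      ↑(((Finset.range q ×ˢ Finset.range q).filter
        (fun p => (p.2 < β₁ ∨ (p.2 = β₁ ∧ p.1 < β₀)) ∧
          (p.1 < γ₁ ∨ (p.1 = γ₁ ∧ p.2 < γ₀)))).image (fun p => p.1 + q * p.2)) := by
    ext a
    simp only [Set.mem_setOf_eq, Finset.coe_image, Set.mem_image, Finset.mem_coe,
      Finset.mem_filter, Finset.mem_product, Finset.mem_range]
    constructor
    · rintro ⟨ha1, ha2, ha3⟩
      have hx : a % q < q := Nat.mod_lt _ (by omega)
      have hrec : a % q + q * (a / q) = a := Nat.mod_add_div a q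
      have hy : a / q < q := by
        rw [Nat.div_lt_iff_lt_mul (by omega : 0 < q)]
        omega
      refine ⟨(a % q, a / q), ⟨⟨hx, hy⟩, ?_⟩, hrec⟩
      exact (hmain _ _ hx hy).mp (by rw [hrec]; exact ⟨ha1, ha2, ha3⟩)
    · rintro ⟨⟨x, y⟩, ⟨⟨hx, hy⟩, hL⟩, rfl⟩
      exact (hmain x y hx hy).mpr hL
  rw [hset, Set.ncard_coe_finset]
  have hinj : Set.InjOn (fun p : ℕ × ℕ => p.1 + q * p.2)
      ↑((Finset.range q ×ˢ Finset.range q).filter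
        (fun p => (p.2 < β₁ ∨ (p.2 = β₁ ∧ p.1 < β₀)) ∧
          (p.1 < γ₁ ∨ (p.1 = γ₁ ∧ p.2 < γ₀)))) := by
    intro p1 hp1 p2 hp2 he
    have he' : p1.1 + q * p1.2 = p2.1 + q * p2.2 := he
    simp only [Finset.coe_filter, Set.mem_setOf_eq, Finset.mem_product,
      Finset.mem_range] at hp1 hp2
    have h1' : (p1.1 + q * p1.2) % q = p1.1 := by
      rw [Nat.add_mul_mod_self_left, Nat.mod_eq_of_lt hp1.1.1]
    have h2' : (p2.1 + q * p2.2) % q = p2.1 := by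
      rw [Nat.add_mul_mod_self_left, Nat.mod_eq_of_lt hp2.1.1]
    have h3' : (p1.1 + q * p1.2) / q = p1.2 := by
      rw [Nat.add_mul_div_left _ _ (by omega : 0 < q), Nat.div_eq_of_lt hp1.1.1]
      omega
    have h4' : (p2.1 + q * p2.2) / q = p2.2 := by
      rw [Nat.add_mul_div_left _ _ (by omega : 0 < q), Nat.div_eq_of_lt hp2.1.1]
      omega
    have : p1.1 = p2.1 := by rw [← h1', ← h2', he']
    have : p1.2 = p2.2 := by rw [← h3', ← h4', he']
    exact Prod.ext ‹p1.1 = p2.1› ‹p1.2 = p2.2›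
  rw [Finset.card_image_of_injOn hinj]
  have hcard : (Finset.range q ×ˢ Finset.range q).filter
        (fun p => (p.2 < β₁ ∨ (p.2 = β₁ ∧ p.1 < β₀)) ∧
          (p.1 < γ₁ ∨ (p.1 = γ₁ ∧ p.2 < γ₀))) =
      (Finset.range γ₁ ×ˢ Finset.range β₁) ∪
        ({γ₁} ×ˢ Finset.range (min β₁ γ₀)) ∪
        (Finset.range (min β₀ γ₁) ×ˢ {β₁}) := by
    ext ⟨x, y⟩
    simp only [Finset.mem_filter, Finset.mem_product, Finset.mem_range,
      Finset.mem_union, Finset.mem_singleton]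
    omega
  rw [hcard]
  rw [Finset.card_union_of_disjoint, Finset.card_union_of_disjoint]
  · simp only [Finset.card_product, Finset.card_range, Finset.card_singleton,
      one_mul, mul_one]
    rw [Nat.mul_comm γ₁ β₁]
    omega
  · rw [Finset.disjoint_left]
    rintro ⟨x, y⟩ h1' h2'
    simp only [Finset.mem_product, Finset.mem_range, Finset.mem_singleton] at h1' h2'
    omega
  · rw [Finset.disjoint_left]
    rintro ⟨x, y⟩ h1' h2'
    simp only [Finset.mem_union, Finset.mem_product, Finset.mem_range,
      Finset.mem_singleton] at h1' h2'
    omega
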